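/- arXiv:1411.4397 — 9 statements merged into one kernel-verified Lean document; each statement's English description precedes it below -/
import Mathlib

section
/- For every real number λ with 0 ≤ λ ≤ 1/2 and every real s ≥ 0, the quantity (1/2)·(1 + (1−2λ)²·s − 8λ + 20λ²) is strictly positive. Consequently the geometric discord of the local output states of the Buzek–Hillery local cloner never vanishes, so optimal broadcasting of quantum correlations beyond entanglement via local cloning is impossible (Theorem 1). -/
/-- For every real `λ ∈ [0, 1/2]` and every real `s ≥ 0`, the geometric-discord
expression `(1/2)·(1 + (1−2λ)²·s − 8λ + 20λ²)` of the local output states of the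
Buzek–Hillery local cloner is strictly positive, so optimal broadcasting of quantum
correlations beyond entanglement via local cloning is impossible (Theorem 1). -/
theorem local_cloner_discord_pos (lam s : ℝ) (h0 : 0 ≤ lam) (h1 : lam ≤ 1/2) (hs : 0 ≤ s) :
    0 < (1/2) * (1 + (1 - 2*lam)^2 * s - 8*lam + 20*lam^2) := by
  nlinarith [sq_nonneg (1 - 2*lam), sq_nonneg (5*lam - 1), mul_nonneg (sq_nonneg (1 - 2*lam)) hs]
end

section
/- For each fixed real s with 0 ≤ s ≤ 1, the minimum over λ ∈ [0,1/4] of the function f(λ) = (1/2)·(1 + (1−4λ)²·s − 16λ + 68λ²) equals (1+5s)/(34+8s), and this minimum is attained at λ = (2+s)/(17+4s); in particular f(λ) ≥ (1+5s)/(34+8s) > 0 for all λ ∈ [0,1/4]. -/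
/-- For each fixed `s ∈ [0, 1]`, the minimum over `λ ∈ [0, 1/4]` of
`f(λ) = (1/2)·(1 + (1−4λ)²·s − 16λ + 68λ²)` equals `(1+5s)/(34+8s)`, attained at
`λ = (2+s)/(17+4s)`; in particular `f(λ) ≥ (1+5s)/(34+8s) > 0` on `[0, 1/4]`. -/
theorem nonlocal_cloner_discord_min (s : ℝ) (hs0 : 0 ≤ s) (hs1 : s ≤ 1) :
    (2 + s) / (17 + 4*s) ∈ Set.Icc (0:ℝ) (1/4) ∧
    (1/2) * (1 + (1 - 4*((2+s)/(17+4*s)))^2 * s - 16*((2+s)/(17+4*s))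
        + 68*((2+s)/(17+4*s))^2) = (1 + 5*s) / (34 + 8*s) ∧
    (∀ lam ∈ Set.Icc (0:ℝ) (1/4),
      (1 + 5*s) / (34 + 8*s) ≤ (1/2) * (1 + (1 - 4*lam)^2 * s - 16*lam + 68*lam^2)) ∧
    0 < (1 + 5*s) / (34 + 8*s) := by
  have hd : (0:ℝ) < 17 + 4*s := by linarith
  have hd2 : (0:ℝ) < 34 + 8*s := by linarith
  refine ⟨⟨by positivity, ?_⟩, ?_, ?_, ?_⟩
  · rw [div_le_div_iff₀ hd (by norm_num)]; linarith
  · field_simp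
    ring
  · intro lam _
    rw [div_le_iff₀ hd2]
    nlinarith [sq_nonneg (lam * (17 + 4*s) - (2 + s)), sq_nonneg lam, hs0]
  · exact div_pos (by linarith) hd2
end

section
/- Let 0 < λ ≤ 1/2, μ = 1−2λ, and x ∈ ℝ³, and suppose the 4×4 matrix ρ̃ = (1/4)·(I₄ + μ·Σᵢ xᵢ(σᵢ⊗I₂ + I₂⊗σᵢ) + 2λ·σ₁⊗σ₁ + 2λ·σ₂⊗σ₂ + (1−4λ)·σ₃⊗σ₃) is positive semidefinite. Then ρ̃ is not classical–quantum: there exist no p ∈ [0,1], orthonormal basis {ψ₁, ψ₂} of ℂ², and single-qubit density matrices ρ₁, ρ₂ such that ρ̃ = p·|ψ₁⟩⟨ψ₁|⊗ρ₁ + (1−p)·|ψ₂⟩⟨ψ₂|⊗ρ₂. Hence the local outputs of the Buzek–Hillery local cloner always carry nonzero geometric discord (Theorem 1). -/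
open Matrix Kronecker
open scoped ComplexOrder

/-- The three Pauli matrices. -/
noncomputable def pauli : Fin 3 → Matrix (Fin 2) (Fin 2) ℂ :=
  ![!![0, 1; 1, 0], !![0, -Complex.I; Complex.I, 0], !![1, 0; 0, -1]]

/-- Theorem 1: For `0 < λ ≤ 1/2`, `μ = 1−2λ` and `x ∈ ℝ³`, if the local
two-clone output `ρ̃ = (1/4)(I₄ + μ·Σᵢ xᵢ(σᵢ⊗I₂ + I₂⊗σᵢ) + 2λ·σ₁⊗σ₁ + 2λ·σ₂⊗σ₂
+ (1−4λ)·σ₃⊗σ₃)` of the Buzek–Hillery local cloner is positive semidefinite, then it is not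
classical–quantum: it admits no decomposition `p·|ψ₁⟩⟨ψ₁|⊗ρ₁ + (1−p)·|ψ₂⟩⟨ψ₂|⊗ρ₂` with
`p ∈ [0,1]`, `{ψ₁, ψ₂}` an orthonormal basis of `ℂ²` and `ρ₁, ρ₂` density matrices.
Hence the local outputs always carry nonzero geometric discord. -/
theorem local_output_not_classical_quantum (lam : ℝ) (hlam0 : 0 < lam) (hlam1 : lam ≤ 1/2)
    (x : Fin 3 → ℝ) (ρ : Matrix (Fin 2 × Fin 2) (Fin 2 × Fin 2) ℂ)
    (hρ : ρ = (1/4 : ℂ) • ((1 : Matrix (Fin 2 × Fin 2) (Fin 2 × Fin 2) ℂ)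
        + ((1 - 2*lam : ℝ) : ℂ) • ∑ i : Fin 3, (x i : ℂ) • (pauli i ⊗ₖ 1 + 1 ⊗ₖ pauli i)
        + ((2*lam : ℝ) : ℂ) • (pauli 0 ⊗ₖ pauli 0)
        + ((2*lam : ℝ) : ℂ) • (pauli 1 ⊗ₖ pauli 1)
        + ((1 - 4*lam : ℝ) : ℂ) • (pauli 2 ⊗ₖ pauli 2)))
    (hpsd : ρ.PosSemidef) :
    ¬ ∃ (p : ℝ) (ψ₁ ψ₂ : Fin 2 → ℂ) (ρ₁ ρ₂ : Matrix (Fin 2) (Fin 2) ℂ),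
      0 ≤ p ∧ p ≤ 1 ∧
      (∑ i, star (ψ₁ i) * ψ₁ i) = 1 ∧ (∑ i, star (ψ₂ i) * ψ₂ i) = 1 ∧
      (∑ i, star (ψ₁ i) * ψ₂ i) = 0 ∧
      ρ₁.PosSemidef ∧ ρ₁.trace = 1 ∧ ρ₂.PosSemidef ∧ ρ₂.trace = 1 ∧
      ρ = (p : ℂ) • (vecMulVec ψ₁ (fun i => star (ψ₁ i)) ⊗ₖ ρ₁)
        + ((1 - p : ℝ) : ℂ) • (vecMulVec ψ₂ (fun i => star (ψ₂ i)) ⊗ₖ ρ₂) := by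
  rintro ⟨p, ψ₁, ψ₂, ρ₁, ρ₂, hp0, hp1, hn1, hn2, horth, hps1, ht1, hps2, ht2, hdec⟩
  simp only [Fin.sum_univ_two] at hn1 hn2 horth
  -- orthogonality conjugate
  have horths : star (ψ₂ 0) * ψ₁ 0 + star (ψ₂ 1) * ψ₁ 1 = 0 := by
    have := congrArg star horth
    simpa [star_add, star_mul', mul_comm] using this
  -- key: outer product entries are opposite
  have key : ψ₂ 0 * star (ψ₂ 1) = -(ψ₁ 0 * star (ψ₁ 1)) := by
    linear_combination -(ψ₂ 0 * star (ψ₂ 1)) * hn1 - (ψ₁ 0 * star (ψ₁ 1)) * hn2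
      + (ψ₁ 0 * star (ψ₂ 1)) * horth + (star (ψ₁ 1) * ψ₂ 0) * horths
  -- hermiticity of ρ₁, ρ₂
  have hH1 : ρ₁ 1 0 = star (ρ₁ 0 1) := by
    have := hps1.isHermitian
    rw [Matrix.IsHermitian] at this
    calc ρ₁ 1 0 = ρ₁ᴴ 1 0 := by rw [this]
      _ = star (ρ₁ 0 1) := Matrix.conjTranspose_apply _ _ _
  have hH2 : ρ₂ 1 0 = star (ρ₂ 0 1) := by
    have := hps2.isHermitian
    rw [Matrix.IsHermitian] at this
    calc ρ₂ 1 0 = ρ₂ᴴ 1 0 := by rw [this]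
      _ = star (ρ₂ 0 1) := Matrix.conjTranspose_apply _ _ _
  have hEq := hρ.symm.trans hdec
  have e1 : (0:ℂ) = (p:ℂ) * (ψ₁ 0 * star (ψ₁ 1)) * ρ₁ 0 1
      + ((1-p:ℝ):ℂ) * (ψ₂ 0 * star (ψ₂ 1)) * ρ₂ 0 1 := by
    have h := congrFun (congrFun hEq ((0,0) : Fin 2 × Fin 2)) ((1,1) : Fin 2 × Fin 2)
    rw [show ((p : ℂ) • (vecMulVec ψ₁ (fun i => star (ψ₁ i)) ⊗ₖ ρ₁)
        + ((1 - p : ℝ) : ℂ) • (vecMulVec ψ₂ (fun i => star (ψ₂ i)) ⊗ₖ ρ₂)) ((0,0)) ((1,1))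
      = (p:ℂ) * (ψ₁ 0 * star (ψ₁ 1)) * ρ₁ 0 1 + ((1-p:ℝ):ℂ) * (ψ₂ 0 * star (ψ₂ 1)) * ρ₂ 0 1 from by
        simp [Matrix.add_apply, Matrix.smul_apply, Matrix.kroneckerMap_apply,
          Matrix.vecMulVec_apply]; ring] at h
    rw [← h]
    simp [pauli, Matrix.add_apply, Matrix.smul_apply, Matrix.one_apply, Matrix.kroneckerMap_apply,
      Fin.sum_univ_three, Matrix.sum_apply]
  have e2 : (lam:ℂ) = (p:ℂ) * (ψ₁ 0 * star (ψ₁ 1)) * ρ₁ 1 0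
      + ((1-p:ℝ):ℂ) * (ψ₂ 0 * star (ψ₂ 1)) * ρ₂ 1 0 := by
    have h := congrFun (congrFun hEq ((0,1) : Fin 2 × Fin 2)) ((1,0) : Fin 2 × Fin 2)
    rw [show ((p : ℂ) • (vecMulVec ψ₁ (fun i => star (ψ₁ i)) ⊗ₖ ρ₁)
        + ((1 - p : ℝ) : ℂ) • (vecMulVec ψ₂ (fun i => star (ψ₂ i)) ⊗ₖ ρ₂)) ((0,1)) ((1,0))
      = (p:ℂ) * (ψ₁ 0 * star (ψ₁ 1)) * ρ₁ 1 0 + ((1-p:ℝ):ℂ) * (ψ₂ 0 * star (ψ₂ 1)) * ρ₂ 1 0 from by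
        simp [Matrix.add_apply, Matrix.smul_apply, Matrix.kroneckerMap_apply,
          Matrix.vecMulVec_apply]; ring] at h
    rw [← h]
    simp [pauli, Matrix.add_apply, Matrix.smul_apply, Matrix.one_apply, Matrix.kroneckerMap_apply,
      Fin.sum_univ_three, Matrix.sum_apply]
    ring
  -- rewrite using key and hermiticity
  set γ : ℂ := ψ₁ 0 * star (ψ₁ 1) with hγ
  set w : ℂ := (p:ℂ) * ρ₁ 0 1 - ((1-p:ℝ):ℂ) * ρ₂ 0 1 with hw
  have e1' : γ * w = 0 := by
    rw [hw]; rw [key] at e1; linear_combination -e1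
  have e2' : γ * star w = (lam:ℂ) := by
    rw [key, hH1, hH2] at e2
    rw [hw]
    simp only [star_sub, star_mul', Complex.star_def, Complex.conj_ofReal]
    simp only [Complex.star_def] at e2
    linear_combination -e2
  have hlamne : (lam:ℂ) ≠ 0 := by
    exact_mod_cast Complex.ofReal_ne_zero.mpr hlam0.ne'
  rcases mul_eq_zero.mp e1' with h | h
  · rw [h, zero_mul] at e2'; exact hlamne e2'.symm
  · rw [h, star_zero, mul_zero] at e2'; exact hlamne e2'.symm
end

section
/- Let 0 < λ ≤ 1/4, μ = 1−4λ, and x ∈ ℝ³, and suppose the 4×4 matrix ρ̃ = (1/4)·(I₄ + μ·Σᵢ xᵢ(σᵢ⊗I₂ + I₂⊗σᵢ) + 2λ·σ₁⊗σ₁ + 2λ·σ₂⊗σ₂ + (1−8λ)·σ₃⊗σ₃) is positive semidefinite. Then ρ̃ is not classical–quantum: there exist no p ∈ [0,1], orthonormal basis {ψ₁, ψ₂} of ℂ², and single-qubit density matrices ρ₁, ρ₂ such that ρ̃ = p·|ψ₁⟩⟨ψ₁|⊗ρ₁ + (1−p)·|ψ₂⟩⟨ψ₂|⊗ρ₂.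 Hence the states ρ̃₁₃, ρ̃₂₄ produced by the Buzek–Hillery nonlocal cloner always carry nonzero geometric discord (Theorem 2). -/
open Matrix Kronecker
open scoped ComplexOrder

/-- Completeness relation for an orthonormal basis of `ℂ²`: the off-diagonal entries of the
two rank-one projectors are opposite. -/
lemma orthonormal_offdiag_sum (ψ₁ ψ₂ : Fin 2 → ℂ)
    (h1 : (starRingEnd ℂ) (ψ₁ 0) * ψ₁ 0 + (starRingEnd ℂ) (ψ₁ 1) * ψ₁ 1 = 1)
    (h2 : (starRingEnd ℂ) (ψ₂ 0) * ψ₂ 0 + (starRingEnd ℂ) (ψ₂ 1) * ψ₂ 1 = 1)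
    (h12 : (starRingEnd ℂ) (ψ₁ 0) * ψ₂ 0 + (starRingEnd ℂ) (ψ₁ 1) * ψ₂ 1 = 0) :
    ψ₂ 0 * (starRingEnd ℂ) (ψ₂ 1) = -(ψ₁ 0 * (starRingEnd ℂ) (ψ₁ 1)) := by
  have h21 : (starRingEnd ℂ) (ψ₂ 0) * ψ₁ 0 + (starRingEnd ℂ) (ψ₂ 1) * ψ₁ 1 = 0 := by
    have := congrArg (starRingEnd ℂ) h12
    simp only [map_add, _root_.map_mul, Complex.conj_conj, map_zero] at this
    linear_combination this
  set M : Matrix (Fin 2) (Fin 2) ℂ :=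
    Matrix.of ![fun j => (starRingEnd ℂ) (ψ₁ j), fun j => (starRingEnd ℂ) (ψ₂ j)] with hM
  have hMM : M * Mᴴ = 1 := by
    ext i j
    rw [Matrix.mul_apply, Fin.sum_univ_two]
    fin_cases i <;> fin_cases j <;>
      simp only [hM, conjTranspose_apply, Matrix.of_apply, Matrix.cons_val_zero,
        Matrix.cons_val_one, Matrix.head_cons, Complex.star_def, Complex.conj_conj,
        Matrix.one_apply, Fin.isValue] <;>
      norm_num <;>
      first
        | linear_combination h1
        | linear_combination h2
        | linear_combination h12
        | linear_combination h21
  have hMM' : Mᴴ * M = 1 := mul_eq_one_comm.mp hMM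
  have := congrFun (congrFun hMM' 0) 1
  rw [Matrix.mul_apply, Fin.sum_univ_two] at this
  simp only [hM, conjTranspose_apply, Matrix.of_apply, Matrix.cons_val_zero,
    Matrix.cons_val_one, Matrix.head_cons, Complex.star_def, Complex.conj_conj,
    Matrix.one_apply, Fin.isValue] at this
  norm_num at this
  linear_combination this

/-- Theorem 2: For `0 < λ ≤ 1/4`, `μ = 1−4λ` and `x ∈ ℝ³`, if the output
`ρ̃ = (1/4)(I₄ + μ·Σᵢ xᵢ(σᵢ⊗I₂ + I₂⊗σᵢ) + 2λ·σ₁⊗σ₁ + 2λ·σ₂⊗σ₂ + (1−8λ)·σ₃⊗σ₃)` of the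
Buzek–Hillery nonlocal cloner is positive semidefinite, then it is not classical–quantum:
it admits no decomposition `p·|ψ₁⟩⟨ψ₁|⊗ρ₁ + (1−p)·|ψ₂⟩⟨ψ₂|⊗ρ₂` with `p ∈ [0,1]`,
`{ψ₁, ψ₂}` an orthonormal basis of `ℂ²` and `ρ₁, ρ₂` density matrices.  Hence the states
`ρ̃₁₃, ρ̃₂₄` produced by the nonlocal cloner always carry nonzero geometric discord. -/
theorem nonlocal_output_not_classical_quantum (lam : ℝ) (hlam0 : 0 < lam) (hlam1 : lam ≤ 1/4)
    (x : Fin 3 → ℝ) (ρ : Matrix (Fin 2 × Fin 2) (Fin 2 × Fin 2) ℂ)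
    (hρ : ρ = (1/4 : ℂ) • ((1 : Matrix (Fin 2 × Fin 2) (Fin 2 × Fin 2) ℂ)
        + ((1 - 4*lam : ℝ) : ℂ) • ∑ i : Fin 3, (x i : ℂ) • (pauli i ⊗ₖ 1 + 1 ⊗ₖ pauli i)
        + ((2*lam : ℝ) : ℂ) • (pauli 0 ⊗ₖ pauli 0)
        + ((2*lam : ℝ) : ℂ) • (pauli 1 ⊗ₖ pauli 1)
        + ((1 - 8*lam : ℝ) : ℂ) • (pauli 2 ⊗ₖ pauli 2)))
    (hpsd : ρ.PosSemidef) :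
    ¬ ∃ (p : ℝ) (ψ₁ ψ₂ : Fin 2 → ℂ) (ρ₁ ρ₂ : Matrix (Fin 2) (Fin 2) ℂ),
      0 ≤ p ∧ p ≤ 1 ∧
      (∑ i, star (ψ₁ i) * ψ₁ i) = 1 ∧ (∑ i, star (ψ₂ i) * ψ₂ i) = 1 ∧
      (∑ i, star (ψ₁ i) * ψ₂ i) = 0 ∧
      ρ₁.PosSemidef ∧ ρ₁.trace = 1 ∧ ρ₂.PosSemidef ∧ ρ₂.trace = 1 ∧
      ρ = (p : ℂ) • (vecMulVec ψ₁ (fun i => star (ψ₁ i)) ⊗ₖ ρ₁)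
        + ((1 - p : ℝ) : ℂ) • (vecMulVec ψ₂ (fun i => star (ψ₂ i)) ⊗ₖ ρ₂) := by
  rintro ⟨p, ψ₁, ψ₂, ρ₁, ρ₂, hp0, hp1, h1, h2, h12, -, -, -, -, hdec⟩
  simp only [Fin.sum_univ_two, Complex.star_def] at h1 h2 h12
  have hcomp := orthonormal_offdiag_sum ψ₁ ψ₂ h1 h2 h12
  have hcomp' : ψ₂ 1 * (starRingEnd ℂ) (ψ₂ 0) = -(ψ₁ 1 * (starRingEnd ℂ) (ψ₁ 0)) := by
    have := congrArg (starRingEnd ℂ) hcomp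
    simp only [_root_.map_mul, map_neg, Complex.conj_conj] at this
    linear_combination this
  have hE := hρ.symm.trans hdec
  -- the four antidiagonal entry equations
  have E1 : (p:ℂ) * (ψ₁ 0 * (starRingEnd ℂ) (ψ₁ 1)) * ρ₁ 0 1
      + (1 - (p:ℂ)) * (ψ₂ 0 * (starRingEnd ℂ) (ψ₂ 1)) * ρ₂ 0 1 = 0 := by
    have := congrFun (congrFun hE ((0,0))) ((1,1))
    simp [pauli, Matrix.sum_apply, Fin.sum_univ_three, Matrix.one_apply,
      vecMulVec_apply, Complex.star_def] at this
    linear_combination -this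
  have E2 : (p:ℂ) * (ψ₁ 0 * (starRingEnd ℂ) (ψ₁ 1)) * ρ₁ 1 0
      + (1 - (p:ℂ)) * (ψ₂ 0 * (starRingEnd ℂ) (ψ₂ 1)) * ρ₂ 1 0 = (lam:ℂ) := by
    have := congrFun (congrFun hE ((0,1))) ((1,0))
    simp [pauli, Matrix.sum_apply, Fin.sum_univ_three, Matrix.one_apply,
      vecMulVec_apply, Complex.star_def] at this
    linear_combination -this
  have E3 : (p:ℂ) * (ψ₁ 1 * (starRingEnd ℂ) (ψ₁ 0)) * ρ₁ 0 1
      + (1 - (p:ℂ)) * (ψ₂ 1 * (starRingEnd ℂ) (ψ₂ 0)) * ρ₂ 0 1 = (lam:ℂ) := by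
    have := congrFun (congrFun hE ((1,0))) ((0,1))
    simp [pauli, Matrix.sum_apply, Fin.sum_univ_three, Matrix.one_apply,
      vecMulVec_apply, Complex.star_def] at this
    linear_combination -this
  have E4 : (p:ℂ) * (ψ₁ 1 * (starRingEnd ℂ) (ψ₁ 0)) * ρ₁ 1 0
      + (1 - (p:ℂ)) * (ψ₂ 1 * (starRingEnd ℂ) (ψ₂ 0)) * ρ₂ 1 0 = 0 := by
    have := congrFun (congrFun hE ((1,1))) ((0,0))
    simp [pauli, Matrix.sum_apply, Fin.sum_univ_three, Matrix.one_apply,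
      vecMulVec_apply, Complex.star_def] at this
    linear_combination -this
  rw [hcomp] at E1 E2
  rw [hcomp'] at E3 E4
  set c : ℂ := ψ₁ 0 * (starRingEnd ℂ) (ψ₁ 1) with hc
  set G : ℂ := (p:ℂ) * ρ₁ 0 1 - (1 - (p:ℂ)) * ρ₂ 0 1 with hG
  set H : ℂ := (p:ℂ) * ρ₁ 1 0 - (1 - (p:ℂ)) * ρ₂ 1 0 with hH
  have hstarc : ψ₁ 1 * (starRingEnd ℂ) (ψ₁ 0) = (starRingEnd ℂ) c := by
    simp [hc, _root_.map_mul, Complex.conj_conj, mul_comm]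
  rw [hstarc] at E3 E4
  have hcG : c * G = 0 := by rw [hG]; linear_combination E1
  have hcH : c * H = (lam:ℂ) := by rw [hH]; linear_combination E2
  have hscG : (starRingEnd ℂ) c * G = (lam:ℂ) := by rw [hG]; linear_combination E3
  have hscH : (starRingEnd ℂ) c * H = 0 := by rw [hH]; linear_combination E4
  have key : (lam:ℂ) * (lam:ℂ) = 0 := by
    calc (lam:ℂ) * (lam:ℂ) = (c * H) * ((starRingEnd ℂ) c * G) := by rw [hcH, hscG]
    _ = (c * G) * ((starRingEnd ℂ) c * H) := by ring
    _ = 0 := by rw [hcG, hscH]; ring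
  have hr : lam * lam = 0 := by exact_mod_cast key
  nlinarith
end

section
/- Let ρ be a 4×4 density matrix with two-qubit Bloch representation {x, y, T}, let P be the projector onto the symmetric subspace of ℂ⁴⊗ℂ⁴, and set σ = (8/5)·P(ρ ⊗ I₄/4)P, a state on four qubits labelled (1,2,3,4) where (1,2) is the first clone and (3,4) the second. Then the partial trace of σ over qubits 2 and 4 equals (1/4)·(I₄ + (3/5)·Σᵢ xᵢ σᵢ⊗I₂ + (3/5)·Σᵢ xᵢ I₂⊗σᵢ + (1/5)·Σⱼ σⱼ⊗σⱼ); i.e. the cross-clone state ρ̃₁₃ has Bloch representation {(3/5)x, (3/5)x, (1/5)I₃}, independently of y and T. -/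
open Matrix Kronecker
open scoped ComplexOrder

/-- The swap operator on `ℂᵈ ⊗ ℂᵈ`. -/
noncomputable def swapOp (d : Type*) [DecidableEq d] : Matrix (d × d) (d × d) ℂ :=
  Matrix.of fun p q => if p.1 = q.2 ∧ p.2 = q.1 then 1 else 0

/-- The projector `P = (I + S)/2` onto the symmetric subspace of `ℂᵈ ⊗ ℂᵈ`. -/
noncomputable def symProj (d : Type*) [DecidableEq d] : Matrix (d × d) (d × d) ℂ :=
  (1/2 : ℂ) • (1 + swapOp d)

section Kronecker

variable {R l m n p ι : Type*} [NonUnitalNonAssocSemiring R]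

lemma sum_kronecker (s : Finset ι) (A : ι → Matrix l m R) (B : Matrix n p R) :
    (∑ i ∈ s, A i) ⊗ₖ B = ∑ i ∈ s, A i ⊗ₖ B := by
  ext
  simp [Matrix.sum_apply, Finset.sum_mul]

lemma kronecker_sum (s : Finset ι) (A : Matrix l m R) (B : ι → Matrix n p R) :
    A ⊗ₖ (∑ i ∈ s, B i) = ∑ i ∈ s, A ⊗ₖ B i := by
  ext
  simp [Matrix.sum_apply, Finset.mul_sum]

end Kronecker

section Swap

variable {d : Type*} [DecidableEq d] [Fintype d]

lemma swapOp_mul_apply (M : Matrix (d × d) (d × d) ℂ) (p q : d × d) :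
    (swapOp d * M) p q = M p.swap q := by
  rw [mul_apply, Finset.sum_eq_single p.swap]
  · simp [swapOp]
  · rintro r - hr
    simp only [swapOp, of_apply, ite_mul, one_mul, zero_mul, ite_eq_right_iff, and_imp]
    intro h₁ h₂
    exact absurd (Prod.ext h₂.symm h₁.symm) hr
  · simp

lemma mul_swapOp_apply (M : Matrix (d × d) (d × d) ℂ) (p q : d × d) :
    (M * swapOp d) p q = M p q.swap := by
  rw [mul_apply, Finset.sum_eq_single q.swap]
  · simp [swapOp]
  · rintro r - hr
    simp only [swapOp, of_apply, mul_ite, mul_one, mul_zero, ite_eq_right_iff, and_imp]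
    intro h₁ h₂
    exact absurd (Prod.ext h₁ h₂) hr
  · simp

lemma symProj_mul_mul_symProj_apply (M : Matrix (d × d) (d × d) ℂ) (p q : d × d) :
    (symProj d * M * symProj d) p q
      = (1/4 : ℂ) * (M p q + M p.swap q + M p q.swap + M p.swap q.swap) := by
  simp only [symProj, Matrix.smul_mul, Matrix.mul_smul, Matrix.add_mul, Matrix.mul_add,
    Matrix.one_mul, Matrix.mul_one, Matrix.smul_apply, Matrix.add_apply, smul_eq_mul,
    swapOp_mul_apply, mul_swapOp_apply]
  ring

end Swap

section PartialTrace

variable {R α β : Type*} [CommSemiring R] [Fintype β]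

def traceRight : Matrix (α × β) (α × β) R →ₗ[R] Matrix α α R where
  toFun ρ := of fun a b => ∑ c, ρ (a, c) (b, c)
  map_add' ρ σ := by ext; simp [Finset.sum_add_distrib]
  map_smul' r ρ := by ext; simp [Finset.mul_sum]

def traceRightBoth :
    Matrix ((α × β) × (α × β)) ((α × β) × (α × β)) R →ₗ[R] Matrix (α × α) (α × α) R where
  toFun X := of fun a b => ∑ c, ∑ d, X ((a.1, c), (a.2, d)) ((b.1, c), (b.2, d))
  map_add' X Y := by ext; simp [Finset.sum_add_distrib]
  map_smul' r X := by ext; simp [Finset.mul_sum]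

lemma traceRight_apply (ρ : Matrix (α × β) (α × β) R) (a b : α) :
    traceRight ρ a b = ∑ c, ρ (a, c) (b, c) :=
  rfl

lemma traceRight_kronecker (A : Matrix α α R) (B : Matrix β β R) :
    traceRight (A ⊗ₖ B) = B.trace • A := by
  ext a b
  simp [traceRight_apply, trace, Finset.mul_sum, mul_comm]

lemma traceRight_one [DecidableEq α] [DecidableEq β] :
    traceRight (1 : Matrix (α × β) (α × β) R) = (Fintype.card β : R) • 1 := by
  rw [← one_kronecker_one, traceRight_kronecker, trace_one]

lemma traceRightBoth_symProj_mul_kronecker_one_mul_symProj [Fintype α] [DecidableEq α]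
    [DecidableEq β] (ρ : Matrix (α × β) (α × β) ℂ) :
    traceRightBoth (symProj (α × β) * (ρ ⊗ₖ 1) * symProj (α × β))
      = (1/4 : ℂ) • ((Fintype.card β : ℂ) • (traceRight ρ ⊗ₖ 1 + 1 ⊗ₖ traceRight ρ)
          + swapOp α * (traceRight ρ ⊗ₖ 1) + (traceRight ρ ⊗ₖ 1) * swapOp α) := by
  ext ⟨a₁, a₂⟩ ⟨b₁, b₂⟩
  simp only [traceRightBoth, LinearMap.coe_mk, AddHom.coe_mk, of_apply,
    symProj_mul_mul_symProj_apply, Prod.swap_prod_mk, kroneckerMap_apply, one_apply,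
    Prod.mk.injEq, Matrix.smul_apply, Matrix.add_apply, swapOp_mul_apply, mul_swapOp_apply,
    traceRight_apply, ← Finset.mul_sum, Finset.sum_add_distrib, ite_and, mul_ite, mul_one,
    mul_zero, ite_mul, one_mul, zero_mul, Finset.sum_ite_eq, Finset.sum_ite_eq',
    Finset.mem_univ, if_true, Finset.sum_ite_irrel, Finset.sum_const_zero, Finset.sum_const,
    Finset.card_univ, smul_eq_mul, nsmul_eq_mul]
  split_ifs <;> ring

end PartialTrace

section Pauli

lemma trace_pauli (i : Fin 3) : (pauli i).trace = 0 := by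
  fin_cases i <;> simp [pauli, trace]

lemma pauli_mul_add_mul_pauli (i j : Fin 3) :
    pauli i * pauli j + pauli j * pauli i = if i = j then (2 : ℂ) • 1 else 0 := by
  ext a b
  fin_cases i <;> fin_cases j <;> fin_cases a <;> fin_cases b <;>
    simp [pauli, one_add_one_eq_two]

lemma swapOp_fin_two : swapOp (Fin 2) = (1/2 : ℂ) • (1 + ∑ j, pauli j ⊗ₖ pauli j) := by
  ext ⟨a₁, a₂⟩ ⟨b₁, b₂⟩
  fin_cases a₁ <;> fin_cases a₂ <;> fin_cases b₁ <;> fin_cases b₂ <;>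
    simp [swapOp, pauli, Fin.sum_univ_three, one_apply] <;> ring_nf

variable (x : Fin 3 → ℂ)

lemma traceRight_bloch (y : Fin 3 → ℂ) (t : Fin 3 → Fin 3 → ℂ) :
    traceRight ((1/4 : ℂ) • ((1 : Matrix (Fin 2 × Fin 2) (Fin 2 × Fin 2) ℂ)
        + ∑ i, x i • (pauli i ⊗ₖ 1) + ∑ i, y i • ((1 : Matrix (Fin 2) (Fin 2) ℂ) ⊗ₖ pauli i)
        + ∑ i, ∑ j, t i j • (pauli i ⊗ₖ pauli j)))
      = (1/2 : ℂ) • (1 + ∑ i, x i • pauli i) := by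
  simp only [map_smul, map_add, map_sum, traceRight_one, traceRight_kronecker, trace_pauli,
    trace_one, Fintype.card_fin, Nat.cast_ofNat, zero_smul, smul_zero, Finset.sum_const_zero,
    add_zero, smul_comm (x _) (2 : ℂ), ← Finset.smul_sum]
  module

lemma pauli_mul_add_mul_pauli_sum (j : Fin 3) :
    pauli j * (∑ i, x i • pauli i) + (∑ i, x i • pauli i) * pauli j = (2 * x j) • 1 := by
  simp only [Matrix.mul_sum, Matrix.sum_mul, Matrix.mul_smul, Matrix.smul_mul,
    ← Finset.sum_add_distrib, ← smul_add, pauli_mul_add_mul_pauli, smul_ite, smul_zero,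
    Finset.sum_ite_eq, Finset.mem_univ, if_true, smul_smul, mul_comm]

lemma swapOp_mul_add_mul_swapOp_pauli_sum :
    swapOp (Fin 2) * ((∑ i, x i • pauli i) ⊗ₖ 1) + ((∑ i, x i • pauli i) ⊗ₖ 1) * swapOp (Fin 2)
      = (∑ i, x i • pauli i) ⊗ₖ 1 + 1 ⊗ₖ (∑ i, x i • pauli i) := by
  set A := ∑ i, x i • pauli i with hA
  have hanti : ∀ j, pauli j * A + A * pauli j = (2 * x j) • 1 := pauli_mul_add_mul_pauli_sum x
  have hsum : ∑ j, (pauli j * A) ⊗ₖ pauli j + ∑ j, (A * pauli j) ⊗ₖ pauli j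
      = (2 : ℂ) • (1 ⊗ₖ A) := by
    conv_rhs => rw [hA]
    simp only [← Finset.sum_add_distrib, ← add_kronecker, hanti,
      smul_kronecker, kronecker_sum, kronecker_smul, Finset.smul_sum, mul_smul]
  rw [swapOp_fin_two]
  simp only [Matrix.smul_mul, Matrix.mul_smul, Matrix.add_mul, Matrix.mul_add, Matrix.sum_mul,
    Matrix.mul_sum, ← mul_kronecker_mul, Matrix.one_mul, Matrix.mul_one]
  linear_combination (norm := module) (1/2 : ℂ) • hsum

end Pauli

theorem nonlocal_cloner_cross_clone_state_general (x y : Fin 3 → ℝ) (t : Fin 3 → Fin 3 → ℝ)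
    (ρ : Matrix (Fin 2 × Fin 2) (Fin 2 × Fin 2) ℂ)
    (hρ : ρ = (1/4 : ℂ) • ((1 : Matrix (Fin 2 × Fin 2) (Fin 2 × Fin 2) ℂ)
        + ∑ i : Fin 3, (x i : ℂ) • (pauli i ⊗ₖ 1)
        + ∑ i : Fin 3, (y i : ℂ) • ((1 : Matrix (Fin 2) (Fin 2) ℂ) ⊗ₖ pauli i)
        + ∑ i : Fin 3, ∑ j : Fin 3, (t i j : ℂ) • (pauli i ⊗ₖ pauli j))) :
    (Matrix.of fun (a b : Fin 2 × Fin 2) => ∑ c : Fin 2, ∑ d : Fin 2,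
        ((8/5 : ℂ) • (symProj (Fin 2 × Fin 2)
          * (ρ ⊗ₖ ((1/4 : ℂ) • (1 : Matrix (Fin 2 × Fin 2) (Fin 2 × Fin 2) ℂ)))
          * symProj (Fin 2 × Fin 2))) ((a.1, c), (a.2, d)) ((b.1, c), (b.2, d)))
    = (1/4 : ℂ) • ((1 : Matrix (Fin 2 × Fin 2) (Fin 2 × Fin 2) ℂ)
        + (3/5 : ℂ) • ∑ i : Fin 3, (x i : ℂ) • (pauli i ⊗ₖ 1)
        + (3/5 : ℂ) • ∑ i : Fin 3, (x i : ℂ) • ((1 : Matrix (Fin 2) (Fin 2) ℂ) ⊗ₖ pauli i)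
        + (1/5 : ℂ) • ∑ j : Fin 3, pauli j ⊗ₖ pauli j) := by
  set A : Matrix (Fin 2) (Fin 2) ℂ := ∑ i, (x i : ℂ) • pauli i with hA
  have hρ₁ : traceRight ρ = (1/2 : ℂ) • (1 + A) := hρ ▸ traceRight_bloch _ _ _
  have hcross : swapOp (Fin 2) * (A ⊗ₖ 1) + (A ⊗ₖ 1) * swapOp (Fin 2) = A ⊗ₖ 1 + 1 ⊗ₖ A :=
    swapOp_mul_add_mul_swapOp_pauli_sum _
  have hA₁ : ∑ i, (x i : ℂ) • (pauli i ⊗ₖ 1) = A ⊗ₖ (1 : Matrix (Fin 2) (Fin 2) ℂ) := by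
    simp only [hA, sum_kronecker, smul_kronecker]
  have h₁A : ∑ i, (x i : ℂ) • ((1 : Matrix (Fin 2) (Fin 2) ℂ) ⊗ₖ pauli i) = 1 ⊗ₖ A := by
    simp only [hA, kronecker_sum, kronecker_smul]
  change traceRightBoth _ = _
  rw [kronecker_smul, Matrix.mul_smul, Matrix.smul_mul, map_smul, map_smul,
    traceRightBoth_symProj_mul_kronecker_one_mul_symProj, hρ₁, hA₁, h₁A]
  simp only [smul_kronecker, kronecker_smul, add_kronecker, kronecker_add, one_kronecker_one,
    Matrix.mul_smul, Matrix.smul_mul, Matrix.mul_add, Matrix.add_mul, Matrix.mul_one,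
    Matrix.one_mul, Fintype.card_fin, Nat.cast_ofNat]
  linear_combination (norm := module) (1/20 : ℂ) • hcross + (1/10 : ℂ) • swapOp_fin_two

/-- Let `ρ` be a two-qubit density matrix with Bloch representation `{x, y, T}`
(here `ℂ⁴` is realised as `ℂ² ⊗ ℂ²`), and let `σ = (8/5)·P(ρ ⊗ I₄/4)P` be the nonlocal
cloner output on four qubits `(1,2,3,4)`, where `(1,2)` is the first clone and `(3,4)` the
second.  Tracing out qubits `2` and `4` from `σ` yields
`(1/4)(I₄ + (3/5)Σᵢ xᵢ σᵢ⊗I₂ + (3/5)Σᵢ xᵢ I₂⊗σᵢ + (1/5)Σⱼ σⱼ⊗σⱼ)`, i.e. the cross-clone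
state `ρ̃₁₃` has Bloch representation `{(3/5)x, (3/5)x, (1/5)I₃}`, independently of `y`
and `T`. -/
theorem nonlocal_cloner_cross_clone_state (x y : Fin 3 → ℝ) (t : Fin 3 → Fin 3 → ℝ)
    (ρ : Matrix (Fin 2 × Fin 2) (Fin 2 × Fin 2) ℂ)
    (hρ : ρ = (1/4 : ℂ) • ((1 : Matrix (Fin 2 × Fin 2) (Fin 2 × Fin 2) ℂ)
        + ∑ i : Fin 3, (x i : ℂ) • (pauli i ⊗ₖ 1)
        + ∑ i : Fin 3, (y i : ℂ) • ((1 : Matrix (Fin 2) (Fin 2) ℂ) ⊗ₖ pauli i)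
        + ∑ i : Fin 3, ∑ j : Fin 3, (t i j : ℂ) • (pauli i ⊗ₖ pauli j)))
    (hpsd : ρ.PosSemidef) :
    (Matrix.of fun (a b : Fin 2 × Fin 2) => ∑ c : Fin 2, ∑ d : Fin 2,
        ((8/5 : ℂ) • (symProj (Fin 2 × Fin 2)
          * (ρ ⊗ₖ ((1/4 : ℂ) • (1 : Matrix (Fin 2 × Fin 2) (Fin 2 × Fin 2) ℂ)))
          * symProj (Fin 2 × Fin 2))) ((a.1, c), (a.2, d)) ((b.1, c), (b.2, d)))
    = (1/4 : ℂ) • ((1 : Matrix (Fin 2 × Fin 2) (Fin 2 × Fin 2) ℂ)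
        + (3/5 : ℂ) • ∑ i : Fin 3, (x i : ℂ) • (pauli i ⊗ₖ 1)
        + (3/5 : ℂ) • ∑ i : Fin 3, (x i : ℂ) • ((1 : Matrix (Fin 2) (Fin 2) ℂ) ⊗ₖ pauli i)
        + (1/5 : ℂ) • ∑ j : Fin 3, pauli j ⊗ₖ pauli j) :=
  nonlocal_cloner_cross_clone_state_general x y t ρ hρ
end

section
/- Let x ∈ ℝ³ with ‖x‖ = x₁²+x₂²+x₃² ≤ 1, and let ρ̃ = (1/4)·(I₄ + (2/3)·Σᵢ xᵢ(σᵢ⊗I₂ + I₂⊗σᵢ) + (1/3)·Σⱼ σⱼ⊗σⱼ). Then the partial transpose ρ̃^{T₂} is positive semidefinite (equivalently, ρ̃ is separable) if and only if ‖x‖ ≤ 3/4 and ‖x‖ ≤ 1 + x₃ + x₃². -/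
/-!
Identify `v : Fin 2 × Fin 2 → ℂ` with the `2 × 2` matrix `V = (s • 1 + ∑ tᵢ • σᵢ) / 2`. In these
Pauli coordinates the quadratic form of `12 ρ̃^{T₂}` is `3 |s|² + ∑ |tᵢ|² + 4 Re (s̄ ∑ xᵢ tᵢ)`. By
Cauchy–Schwarz and `3 |s|² + (4/3) |y|² + 4 Re (s̄ y) = |3 s + 2 y|² / 3` it is nonnegative when
`‖x‖ ≤ 3/4`, while `s = -4‖x‖/3`, `t = 2x` gives the value `4‖x‖ (3 - 4‖x‖) / 3`.
-/

open Matrix Kronecker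
open scoped ComplexOrder

/-- Partial transpose on the second qubit:
`(ρ^{T₂})_{(i,μ),(j,ν)} = ρ_{(i,ν),(j,μ)}`. -/
noncomputable def ptranspose (ρ : Matrix (Fin 2 × Fin 2) (Fin 2 × Fin 2) ℂ) :
    Matrix (Fin 2 × Fin 2) (Fin 2 × Fin 2) ℂ :=
  Matrix.of fun p q => ρ (p.1, q.2) (q.1, p.2)

open Complex
open scoped ComplexConjugate InnerProductSpace

-- Over `ℂ` hermiticity is automatic: by polarization, a real-valued quadratic form is Hermitian.
theorem Matrix.posSemidef_iff_forall_dotProduct_mulVec_nonneg {n : Type*} [Fintype n]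
    [DecidableEq n] {A : Matrix n n ℂ} :
    A.PosSemidef ↔ ∀ v, 0 ≤ star v ⬝ᵥ A *ᵥ v := by
  refine ⟨fun hA => hA.dotProduct_mulVec_nonneg, fun h => ?_⟩
  rw [← isPositive_toEuclideanLin_iff, LinearMap.isPositive_iff_complex]
  intro v
  have hinner : ⟪A.toEuclideanLin v, v⟫_ℂ = star (star v.ofLp ⬝ᵥ A *ᵥ v.ofLp) := by
    rw [EuclideanSpace.inner_eq_star_dotProduct, star_dotProduct, star_star, dotProduct_comm]
    rfl
  obtain ⟨hre, him⟩ := Complex.nonneg_iff.mp (h v.ofLp)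
  have hreal : star v.ofLp ⬝ᵥ A *ᵥ v.ofLp = ((star v.ofLp ⬝ᵥ A *ᵥ v.ofLp).re : ℂ) :=
    Complex.ext rfl him.symm
  rw [hinner, hreal]
  simpa using hre

lemma normSq_sum_ofReal_mul_le {ι : Type*} (s : Finset ι) (x : ι → ℝ) (t : ι → ℂ) :
    normSq (∑ i ∈ s, x i * t i) ≤ (∑ i ∈ s, x i ^ 2) * ∑ i ∈ s, normSq (t i) := by
  have hre := Finset.sum_mul_sq_le_sq_mul_sq s x fun i => (t i).re
  have him := Finset.sum_mul_sq_le_sq_mul_sq s x fun i => (t i).im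
  simp only [normSq_apply, re_sum, im_sum, re_ofReal_mul, im_ofReal_mul, Finset.sum_add_distrib,
    ← sq, mul_add]
  linarith

lemma three_normSq_add_re_conj_mul_nonneg (s y : ℂ) {T : ℝ} (h : 4 * normSq y ≤ 3 * T) :
    0 ≤ 3 * normSq s + T + 4 * (conj s * y).re := by
  have hsq := normSq_nonneg (3 * s + 2 * y)
  simp only [normSq_apply, mul_re, mul_im, add_re, add_im, conj_re, conj_im] at h hsq ⊢
  norm_num at hsq
  nlinarith

@[simps]
noncomputable def ptransposeLinearMap :
    Matrix (Fin 2 × Fin 2) (Fin 2 × Fin 2) ℂ →ₗ[ℂ] Matrix (Fin 2 × Fin 2) (Fin 2 × Fin 2) ℂ where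
  toFun := ptranspose
  map_add' _ _ := rfl
  map_smul' _ _ := rfl

lemma ptranspose_kronecker (A B : Matrix (Fin 2) (Fin 2) ℂ) :
    ptranspose (A ⊗ₖ B) = A ⊗ₖ Bᵀ := by
  ext
  simp [ptranspose]

lemma ptranspose_one : ptranspose 1 = 1 := by
  rw [← one_kronecker_one, ptranspose_kronecker, transpose_one]

section PauliCoordinates

variable (v : Fin 2 × Fin 2 → ℂ)

noncomputable def traceCoord : ℂ := (of (Function.curry v)).trace

noncomputable def pauliCoord (i : Fin 3) : ℂ := (pauli i * of (Function.curry v)).trace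

noncomputable def ofPauliCoords (s : ℂ) (t : Fin 3 → ℂ) : Fin 2 × Fin 2 → ℂ :=
  Function.uncurry (of.symm ((2⁻¹ : ℂ) • (s • 1 + ∑ j, t j • pauli j)))

@[simp]
lemma traceCoord_ofPauliCoords (s : ℂ) (t : Fin 3 → ℂ) : traceCoord (ofPauliCoords s t) = s := by
  simp [traceCoord, ofPauliCoords, trace, Fin.sum_univ_three, pauli]
  ring

@[simp]
lemma pauliCoord_ofPauliCoords (s : ℂ) (t : Fin 3 → ℂ) (i : Fin 3) :
    pauliCoord (ofPauliCoords s t) i = t i := by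
  unfold pauliCoord ofPauliCoords
  simp only [trace, diag, mul_apply, Fin.sum_univ_two, Function.curry_uncurry]
  fin_cases i <;> simp [Fin.sum_univ_three, pauli]
  · ring
  · linear_combination (-t 1) * I_sq
  · ring

lemma dotProduct_star_self_eq_pauliCoord :
    star v ⬝ᵥ v = ((normSq (traceCoord v) + ∑ i, normSq (pauliCoord v i)) / 2 : ℝ) := by
  simp only [traceCoord, pauliCoord, trace, Fin.sum_univ_two, Fin.sum_univ_three, mul_apply,
    dotProduct, Fintype.sum_prod_type, diag, of_apply, Function.curry_apply, pauli, Pi.star_apply]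
  apply Complex.ext <;> simp [normSq_apply] <;> ring

lemma dotProduct_mulVec_pauli_kronecker_add_eq_pauliCoord (i : Fin 3) :
    star v ⬝ᵥ (pauli i ⊗ₖ 1 + 1 ⊗ₖ (pauli i)ᵀ) *ᵥ v
      = (2 * (conj (traceCoord v) * pauliCoord v i).re : ℝ) := by
  fin_cases i <;>
  · simp only [traceCoord, pauliCoord, trace, Fin.sum_univ_two, mul_apply, dotProduct, mulVec,
      Fintype.sum_prod_type, diag, of_apply, Function.curry_apply, pauli, Pi.star_apply,
      Matrix.add_apply, kroneckerMap_apply, one_apply, transpose_apply]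
    apply Complex.ext <;> simp <;> ring

lemma dotProduct_mulVec_sum_pauli_kronecker_eq_pauliCoord :
    star v ⬝ᵥ (∑ j, pauli j ⊗ₖ (pauli j)ᵀ) *ᵥ v
      = ((3 * normSq (traceCoord v) - ∑ i, normSq (pauliCoord v i)) / 2 : ℝ) := by
  simp only [traceCoord, pauliCoord, trace, Fin.sum_univ_two, Fin.sum_univ_three, mul_apply,
    dotProduct, mulVec, Fintype.sum_prod_type, diag, of_apply, Function.curry_apply, pauli,
    Pi.star_apply, Matrix.sum_apply, kroneckerMap_apply, transpose_apply]
  apply Complex.ext <;> simp [normSq_apply] <;> ring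

end PauliCoordinates

noncomputable def localOutput (x : Fin 3 → ℝ) : Matrix (Fin 2 × Fin 2) (Fin 2 × Fin 2) ℂ :=
  (1/4 : ℂ) • ((1 : Matrix (Fin 2 × Fin 2) (Fin 2 × Fin 2) ℂ)
    + (2/3 : ℂ) • ∑ i : Fin 3, (x i : ℂ) • (pauli i ⊗ₖ 1 + 1 ⊗ₖ pauli i)
    + (1/3 : ℂ) • ∑ j : Fin 3, pauli j ⊗ₖ pauli j)

lemma ptranspose_localOutput (x : Fin 3 → ℝ) :
    ptranspose (localOutput x) = (1/4 : ℂ) • ((1 : Matrix (Fin 2 × Fin 2) (Fin 2 × Fin 2) ℂ)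
      + (2/3 : ℂ) • ∑ i : Fin 3, (x i : ℂ) • (pauli i ⊗ₖ 1 + 1 ⊗ₖ (pauli i)ᵀ)
      + (1/3 : ℂ) • ∑ j : Fin 3, pauli j ⊗ₖ (pauli j)ᵀ) := by
  change ptransposeLinearMap (localOutput x) = _
  simp only [localOutput, map_add, map_smul, map_sum, ptransposeLinearMap_apply, ptranspose_one,
    ptranspose_kronecker, transpose_one]

lemma dotProduct_mulVec_ptranspose_localOutput (x : Fin 3 → ℝ) (v : Fin 2 × Fin 2 → ℂ) :
    star v ⬝ᵥ ptranspose (localOutput x) *ᵥ v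
      = ((3 * normSq (traceCoord v) + ∑ i, normSq (pauliCoord v i)
          + 4 * (conj (traceCoord v) * ∑ i, x i * pauliCoord v i).re) / 12 : ℝ) := by
  rw [ptranspose_localOutput, smul_mulVec, add_mulVec, add_mulVec, one_mulVec, smul_mulVec,
    smul_mulVec, sum_mulVec]
  simp only [smul_mulVec, dotProduct_add, dotProduct_smul, dotProduct_sum, smul_eq_mul,
    dotProduct_star_self_eq_pauliCoord, dotProduct_mulVec_pauli_kronecker_add_eq_pauliCoord,
    dotProduct_mulVec_sum_pauli_kronecker_eq_pauliCoord]
  have hre : (conj (traceCoord v) * ∑ i, x i * pauliCoord v i).re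
      = ∑ i, x i * (conj (traceCoord v) * pauliCoord v i).re := by
    simp only [Finset.mul_sum, re_sum, mul_left_comm _ (x _ : ℂ), re_ofReal_mul]
  have hsum : ∑ i, (x i : ℂ) * ((2 * (conj (traceCoord v) * pauliCoord v i).re : ℝ) : ℂ)
      = 2 * ((∑ i, x i * (conj (traceCoord v) * pauliCoord v i).re : ℝ) : ℂ) := by
    push_cast
    rw [Finset.mul_sum]
    exact Finset.sum_congr rfl fun i _ => by ring
  rw [hsum, hre]
  push_cast
  ring

lemma ptranspose_localOutput_posSemidef_iff (x : Fin 3 → ℝ) :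
    (ptranspose (localOutput x)).PosSemidef ↔ ∑ i, x i ^ 2 ≤ 3/4 := by
  simp only [posSemidef_iff_forall_dotProduct_mulVec_nonneg,
    dotProduct_mulVec_ptranspose_localOutput, zero_le_real]
  constructor
  · intro h
    have hwit := h (ofPauliCoords ((-(4/3) * ∑ i, x i ^ 2 : ℝ) : ℂ) fun i => ((2 * x i : ℝ) : ℂ))
    simp only [traceCoord_ofPauliCoords, pauliCoord_ofPauliCoords, conj_ofReal, normSq_ofReal,
      ← ofReal_mul, ← ofReal_sum, ofReal_re, Fin.sum_univ_three] at hwit ⊢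
    nlinarith
  · intro h v
    have hnormSq_nonneg : 0 ≤ ∑ i, normSq (pauliCoord v i) :=
      Finset.sum_nonneg fun i _ => normSq_nonneg (pauliCoord v i)
    refine div_nonneg (three_normSq_add_re_conj_mul_nonneg _ _ ?_) (by norm_num)
    calc 4 * normSq (∑ i, x i * pauliCoord v i)
        ≤ 4 * ((∑ i, x i ^ 2) * ∑ i, normSq (pauliCoord v i)) := by
          gcongr; exact normSq_sum_ofReal_mul_le _ _ _
      _ ≤ 3 * ∑ i, normSq (pauliCoord v i) := by nlinarith

theorem local_output_separability_general (x : Fin 3 → ℝ) :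
    (ptranspose ((1/4 : ℂ) • ((1 : Matrix (Fin 2 × Fin 2) (Fin 2 × Fin 2) ℂ)
        + (2/3 : ℂ) • ∑ i : Fin 3, (x i : ℂ) • (pauli i ⊗ₖ 1 + 1 ⊗ₖ pauli i)
        + (1/3 : ℂ) • ∑ j : Fin 3, pauli j ⊗ₖ pauli j))).PosSemidef
    ↔ (x 0 ^ 2 + x 1 ^ 2 + x 2 ^ 2 ≤ 3/4 ∧
       x 0 ^ 2 + x 1 ^ 2 + x 2 ^ 2 ≤ 1 + x 2 + x 2 ^ 2) := by
  change (ptranspose (localOutput x)).PosSemidef ↔ _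
  rw [ptranspose_localOutput_posSemidef_iff, Fin.sum_univ_three]
  -- the second condition is implied by the first, as `1 + x₃ + x₃² ≥ 3/4`
  exact ⟨fun h => ⟨h, by nlinarith [sq_nonneg (x 2 + 1/2)]⟩, And.left⟩

/-- The local output `ρ̃₁₃ = {(2/3)x, (2/3)x, (1/3)I₃}` of the Buzek–Hillery
local optimal cloner has positive semidefinite partial transpose (equivalently, is separable)
iff `‖x‖ ≤ 3/4` and `‖x‖ ≤ 1 + x₃ + x₃²`, where `‖x‖ = x₁² + x₂² + x₃²`. -/
theorem local_output_separability (x : Fin 3 → ℝ)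
    (hx : x 0 ^ 2 + x 1 ^ 2 + x 2 ^ 2 ≤ 1) :
    (ptranspose ((1/4 : ℂ) • ((1 : Matrix (Fin 2 × Fin 2) (Fin 2 × Fin 2) ℂ)
        + (2/3 : ℂ) • ∑ i : Fin 3, (x i : ℂ) • (pauli i ⊗ₖ 1 + 1 ⊗ₖ pauli i)
        + (1/3 : ℂ) • ∑ j : Fin 3, pauli j ⊗ₖ pauli j))).PosSemidef
    ↔ (x 0 ^ 2 + x 1 ^ 2 + x 2 ^ 2 ≤ 3/4 ∧
       x 0 ^ 2 + x 1 ^ 2 + x 2 ^ 2 ≤ 1 + x 2 + x 2 ^ 2) :=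
  local_output_separability_general x
end

section
/- Let x ∈ ℝ³ with ‖x‖ = x₁²+x₂²+x₃² ≤ 1, and let ρ̃ = (1/4)·(I₄ + (3/5)·Σᵢ xᵢ(σᵢ⊗I₂ + I₂⊗σᵢ) + (1/5)·Σⱼ σⱼ⊗σⱼ). Then the partial transpose ρ̃^{T₂} is positive semidefinite (equivalently, ρ̃ is separable) if and only if ‖x‖ ≤ 8/9 and ‖x‖ − x₃² ≤ (4/3)(1 + x₃). -/
open Matrix Kronecker
open scoped ComplexOrder

/-!
Write `z = x₁ + i x₂` and `s = v₀₀ + v₁₁`. Completing squares in the Hermitian form of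
`ρ̃^{T₂}` gives
`v* ρ̃^{T₂} v = (1/5)|v₀₁ + ¾ z̄ s|² + (1/5)|v₁₀ + ¾ z s|² + (1/10)|v₀₀ - v₁₁ + (3/2) x₃ s|²
  + ((8 - 9‖x‖)/40)|s|²`,
and the four linear forms are independent. So `ρ̃^{T₂}` is congruent to a diagonal matrix whose
only entry of indefinite sign is `(8 - 9‖x‖)/40`, and it is positive semidefinite iff
`‖x‖ ≤ 8/9`. This already implies `‖x‖ - x₃² ≤ (4/3)(1 + x₃)`, because
`4/3 + (4/3) x₃ - (8/9 - x₃²) = (x₃ + 2/3)²`.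
-/

/-- The rows are the four linear forms of the square completion, in the basis
`|00⟩, |01⟩, |10⟩, |11⟩`. -/
noncomputable def residualFactor (x : Fin 3 → ℝ) : Matrix (Fin 4) (Fin 4) ℂ :=
  let z : ℂ := x 0 + x 1 * Complex.I
  !![3 * star z / 4, 1, 0, 3 * star z / 4;
     3 * z / 4, 0, 1, 3 * z / 4;
     1 + 3 * x 2 / 2, 0, 0, -1 + 3 * x 2 / 2;
     1, 0, 0, 1]

noncomputable def residualWeights (x : Fin 3 → ℝ) : Fin 4 → ℝ :=
  ![1 / 5, 1 / 5, 1 / 10, (8 - 9 * (x 0 ^ 2 + x 1 ^ 2 + x 2 ^ 2)) / 40]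

theorem isUnit_residualFactor (x : Fin 3 → ℝ) : IsUnit (residualFactor x) := by
  let z : ℂ := x 0 + x 1 * Complex.I
  have hinv : residualFactor x *
      !![0, 0, 1 / 2, (1 - 3 * (x 2 : ℂ) / 2) / 2;
         1, 0, 0, -3 * star z / 4;
         0, 1, 0, -3 * z / 4;
         0, 0, -1 / 2, (1 + 3 * (x 2 : ℂ) / 2) / 2] = 1 := by
    ext i j
    fin_cases i <;> fin_cases j <;>
      simp [residualFactor, z, Matrix.mul_apply, Fin.sum_univ_four] <;> ring
  exact (isUnit_iff_isUnit_det _).2 (isUnit_det_of_right_inverse hinv)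

theorem ptranspose_residual_eq (x : Fin 3 → ℝ) :
    ptranspose ((1/4 : ℂ) • ((1 : Matrix (Fin 2 × Fin 2) (Fin 2 × Fin 2) ℂ)
        + (3/5 : ℂ) • ∑ i : Fin 3, (x i : ℂ) • (pauli i ⊗ₖ 1 + 1 ⊗ₖ pauli i)
        + (1/5 : ℂ) • ∑ j : Fin 3, pauli j ⊗ₖ pauli j))
    = (star (residualFactor x) * diagonal (fun i ↦ (residualWeights x i : ℂ)) *
        residualFactor x).submatrix finProdFinEquiv finProdFinEquiv := by
  ext ⟨i, μ⟩ ⟨j, ν⟩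
  fin_cases i <;> fin_cases j <;> fin_cases μ <;> fin_cases ν <;>
    simp [ptranspose, pauli, residualFactor, residualWeights, Matrix.mul_apply,
      Fin.sum_univ_four, Fin.sum_univ_three, Matrix.one_apply, finProdFinEquiv, map_ofNat] <;>
    apply Complex.ext <;> simp [← Complex.ofReal_pow] <;> ring

theorem residualWeights_nonneg_iff (x : Fin 3 → ℝ) :
    (∀ i, 0 ≤ residualWeights x i) ↔ x 0 ^ 2 + x 1 ^ 2 + x 2 ^ 2 ≤ 8/9 := by
  simp only [residualWeights, Fin.forall_fin_succ, cons_val_zero, cons_val_succ, cons_val_fin_one,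
    IsEmpty.forall_iff, and_true, one_div, inv_nonneg, Nat.ofNat_nonneg, true_and]
  constructor <;> intro h <;> linarith

theorem nonlocal_residual_separability_general (x : Fin 3 → ℝ) :
    (ptranspose ((1/4 : ℂ) • ((1 : Matrix (Fin 2 × Fin 2) (Fin 2 × Fin 2) ℂ)
        + (3/5 : ℂ) • ∑ i : Fin 3, (x i : ℂ) • (pauli i ⊗ₖ 1 + 1 ⊗ₖ pauli i)
        + (1/5 : ℂ) • ∑ j : Fin 3, pauli j ⊗ₖ pauli j))).PosSemidef
    ↔ (x 0 ^ 2 + x 1 ^ 2 + x 2 ^ 2 ≤ 8/9 ∧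
       x 0 ^ 2 + x 1 ^ 2 + x 2 ^ 2 - x 2 ^ 2 ≤ (4/3) * (1 + x 2)) := by
  rw [ptranspose_residual_eq, posSemidef_submatrix_equiv,
    (isUnit_residualFactor x).posSemidef_star_left_conjugate_iff, posSemidef_diagonal_iff]
  simp only [Complex.zero_le_real, residualWeights_nonneg_iff]
  refine ⟨fun h ↦ ⟨h, ?_⟩, And.left⟩
  nlinarith [sq_nonneg (x 2 + 2/3)]

/-- The residual output `ρ̃₁₃ = {(3/5)x, (3/5)x, (1/5)I₃}` of the Buzek–Hillery
nonlocal optimal cloner has positive semidefinite partial transpose (equivalently, is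
separable) iff `‖x‖ ≤ 8/9` and `‖x‖ − x₃² ≤ (4/3)(1 + x₃)`, where `‖x‖ = x₁² + x₂² + x₃²`. -/
theorem nonlocal_residual_separability (x : Fin 3 → ℝ)
    (hx : x 0 ^ 2 + x 1 ^ 2 + x 2 ^ 2 ≤ 1) :
    (ptranspose ((1/4 : ℂ) • ((1 : Matrix (Fin 2 × Fin 2) (Fin 2 × Fin 2) ℂ)
        + (3/5 : ℂ) • ∑ i : Fin 3, (x i : ℂ) • (pauli i ⊗ₖ 1 + 1 ⊗ₖ pauli i)
        + (1/5 : ℂ) • ∑ j : Fin 3, pauli j ⊗ₖ pauli j))).PosSemidef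
    ↔ (x 0 ^ 2 + x 1 ^ 2 + x 2 ^ 2 ≤ 8/9 ∧
       x 0 ^ 2 + x 1 ^ 2 + x 2 ^ 2 - x 2 ^ 2 ≤ (4/3) * (1 + x 2)) :=
  nonlocal_residual_separability_general x
end

section
/- Let p ∈ [0,1], α ∈ [0,1], β = √(1−α²), and consider the two-qubit matrix ρ̃ = (1/4)·(I₄ + (2/3)p(2α²−1)(σ₃⊗I₂ + I₂⊗σ₃) + (4/9)·(2pαβ·σ₁⊗σ₁ − 2pαβ·σ₂⊗σ₂ + p·σ₃⊗σ₃)). Then the partial transpose ρ̃^{T₂} fails to be positive semidefinite (equivalently, ρ̃ is entangled) if and only if 3/4 < p ≤ 1 and N₋ < α² < N₊, where N± = (1/16)·(8 ± √(48 − 81/p² + 72/p)). This is the broadcasting range of werner-like states under local cloning. -/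
/-!
In the basis `|00⟩, |01⟩, |10⟩, |11⟩` the partial transpose of `ρ̃` is diagonal except for a
real coupling `e = 4pαβ/9` between `|01⟩` and `|10⟩`, whose diagonal entries are both
`b = (9 - 4p)/36`. The other two diagonal entries are nonnegative for `p, α ∈ [0, 1]`, so
`ρ̃^{T₂}` is positive semidefinite iff `e ≤ b`, i.e. iff `16pα√(1 - α²) ≤ 9 - 4p`. Squaring,
the failure of this inequality becomes `p²(16α² - 8)² < 3(4p - 3)(4p + 9)`, a quadratic
condition in `α²` with roots `N±`, which can only hold when `p > 3/4`.
-/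

open Matrix Kronecker
open scoped ComplexOrder

theorem Matrix.IsHermitian.kronecker {m n R : Type*} [CommMagma R] [StarMul R]
    {A : Matrix m m R} {B : Matrix n n R} (hA : A.IsHermitian) (hB : B.IsHermitian) :
    (A ⊗ₖ B).IsHermitian := by
  rw [IsHermitian, conjTranspose_kronecker, hA.eq, hB.eq]

theorem isHermitian_pauli (i : Fin 3) : (pauli i).IsHermitian := by
  fin_cases i <;> ext a b <;> fin_cases a <;> fin_cases b <;> simp [pauli]

theorem Matrix.IsHermitian.ptranspose {ρ : Matrix (Fin 2 × Fin 2) (Fin 2 × Fin 2) ℂ}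
    (hρ : ρ.IsHermitian) : (ptranspose ρ).IsHermitian := by
  ext p q
  simpa [_root_.ptranspose] using congrFun (congrFun hρ (p.1, q.2)) (q.1, p.2)

-- `ρ̃` with `c = (2/3)p(α² - β²)`, `t = 2pαβ` and `P = p`.
noncomputable def clonedState (c t P : ℝ) : Matrix (Fin 2 × Fin 2) (Fin 2 × Fin 2) ℂ :=
  (1/4 : ℂ) • ((1 : Matrix (Fin 2 × Fin 2) (Fin 2 × Fin 2) ℂ)
        + ((c : ℝ) : ℂ) • (pauli 2 ⊗ₖ 1 + 1 ⊗ₖ pauli 2)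
        + (4/9 : ℂ) • (((t : ℝ) : ℂ) • (pauli 0 ⊗ₖ pauli 0)
            - ((t : ℝ) : ℂ) • (pauli 1 ⊗ₖ pauli 1)
            + ((P : ℝ) : ℂ) • (pauli 2 ⊗ₖ pauli 2)))

theorem isHermitian_clonedState (c t P : ℝ) : (clonedState c t P).IsHermitian := by
  have hσ := isHermitian_pauli
  have h1 : (1 : Matrix (Fin 2) (Fin 2) ℂ).IsHermitian := isHermitian_one
  have hσσ (i : Fin 3) := (hσ i).kronecker (hσ i)
  have hr (r : ℝ) : IsSelfAdjoint (r : ℂ) := Complex.conj_ofReal r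
  have hlocal := (((hσ 2).kronecker h1).add (h1.kronecker (hσ 2))).smul (hr c)
  have hcorr := (((hσσ 0).smul (hr t)).sub ((hσσ 1).smul (hr t))).add ((hσσ 2).smul (hr P))
  exact ((isHermitian_one.add hlocal).add (hcorr.smul (by simp [IsSelfAdjoint]))).smul
    (by simp [IsSelfAdjoint])

theorem star_dotProduct_ptranspose_clonedState_mulVec (c t P : ℝ) (x : Fin 2 × Fin 2 → ℂ) :
    star x ⬝ᵥ (ptranspose (clonedState c t P) *ᵥ x) =
      (((1 + 2*c + 4*P/9)/4 * ‖x (0,0)‖^2 + (9 - 4*P)/36 * (‖x (0,1)‖^2 + ‖x (1,0)‖^2)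
        + (1 - 2*c + 4*P/9)/4 * ‖x (1,1)‖^2
        + 2 * (2*t/9) * (star (x (0,1)) * x (1,0)).re : ℝ) : ℂ) := by
  apply Complex.ext <;>
  simp [dotProduct, mulVec, Fintype.sum_prod_type, Fin.sum_univ_two, clonedState, ptranspose,
    pauli, one_apply, kroneckerMap_apply, Complex.sq_norm, Complex.normSq_apply] <;>
  ring

theorem posSemidef_iff_abs_le_of_star_dotProduct_mulVec
    {M : Matrix (Fin 2 × Fin 2) (Fin 2 × Fin 2) ℂ} (hM : M.IsHermitian) {a b d e : ℝ}
    (ha : 0 ≤ a) (hd : 0 ≤ d)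
    (hform : ∀ x, star x ⬝ᵥ (M *ᵥ x) = ((a * ‖x (0,0)‖^2 + b * (‖x (0,1)‖^2 + ‖x (1,0)‖^2)
      + d * ‖x (1,1)‖^2 + 2 * e * (star (x (0,1)) * x (1,0)).re : ℝ) : ℂ)) :
    M.PosSemidef ↔ |e| ≤ b := by
  simp_rw [posSemidef_iff_dotProduct_mulVec, and_iff_right hM, hform, Complex.zero_le_real]
  constructor
  · intro h
    have hcoupled (s : ℝ) : 0 ≤ b * (1 + s ^ 2) + 2 * e * s := by
      simpa using h (fun q => !![0, 1; (s : ℂ), 0] q.1 q.2)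
    have := hcoupled 1
    have := hcoupled (-1)
    exact abs_le.2 ⟨by linarith, by linarith⟩
  · intro h x
    set m := ‖x (0,1)‖
    set n := ‖x (1,0)‖
    set r := (star (x (0,1)) * x (1,0)).re
    have hr : |r| ≤ m * n :=
      (Complex.abs_re_le_norm _).trans_eq (by rw [norm_mul, norm_star])
    have hmn : 2 * |e * r| ≤ b * (m ^ 2 + n ^ 2) := calc
      2 * |e * r| ≤ |e| * (2 * m * n) := by
        rw [abs_mul]; linarith [mul_le_mul_of_nonneg_left hr (abs_nonneg e)]
      _ ≤ |e| * (m ^ 2 + n ^ 2) := by gcongr; exact two_mul_le_add_sq m n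
      _ ≤ b * (m ^ 2 + n ^ 2) := by gcongr
    linarith [neg_abs_le (e * r), mul_nonneg ha (sq_nonneg ‖x (0,0)‖),
      mul_nonneg hd (sq_nonneg ‖x (1,1)‖)]

theorem sq_sixteen_mul_sub_eight_lt_iff (D u : ℝ) :
    (16 * u - 8) ^ 2 < D ↔ 1/16 * (8 - √D) < u ∧ u < 1/16 * (8 + √D) := by
  rw [← sq_abs, ← Real.lt_sqrt (abs_nonneg _), abs_sub_lt_iff]
  constructor <;> rintro ⟨h₁, h₂⟩ <;> constructor <;> linarith

theorem nine_sub_four_mul_lt_iff_sq_lt {p α : ℝ} (hp0 : 0 ≤ p) (hp1 : p ≤ 1) (hα0 : 0 ≤ α)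
    (hα1 : α ≤ 1) :
    9 - 4 * p < 8 * (2 * p * α * √(1 - α ^ 2)) ↔
      p ^ 2 * (16 * α ^ 2 - 8) ^ 2 < 3 * (4 * p - 3) * (4 * p + 9) := by
  have hα : α ^ 2 ≤ 1 := pow_le_one₀ hα0 hα1
  rw [← pow_lt_pow_iff_left₀ (by linarith) (by positivity) two_ne_zero,
    show 8 * (2 * p * α * √(1 - α ^ 2)) = 16 * p * α * √(1 - α ^ 2) by ring, mul_pow,
    Real.sq_sqrt (by linarith)]
  constructor <;> intro h <;> nlinarith

theorem sq_mul_lt_iff_three_quarters_lt {p u : ℝ} (hp : 0 ≤ p) (hu : 0 ≤ u) :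
    p ^ 2 * u < 3 * (4 * p - 3) * (4 * p + 9) ↔ 3/4 < p ∧ u < 48 - 81 / p ^ 2 + 72 / p := by
  have hD (hpos : 0 < p) : 48 - 81 / p ^ 2 + 72 / p = 3 * (4 * p - 3) * (4 * p + 9) / p ^ 2 := by
    field_simp; ring
  constructor
  · intro h
    have hp : 3/4 < p := by nlinarith [mul_nonneg (sq_nonneg p) hu]
    rw [hD (by linarith), lt_div_iff₀ (by positivity), mul_comm]
    exact ⟨hp, h⟩
  · rintro ⟨hp, h⟩
    rwa [hD (by linarith), lt_div_iff₀ (by positivity), mul_comm] at h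

theorem posSemidef_ptranspose_clonedState_iff (c t P : ℝ) (ha : 0 ≤ 1 + 2 * c + 4 * P / 9)
    (hd : 0 ≤ 1 - 2 * c + 4 * P / 9) :
    (ptranspose (clonedState c t P)).PosSemidef ↔ 8 * |t| ≤ 9 - 4 * P := by
  rw [posSemidef_iff_abs_le_of_star_dotProduct_mulVec (isHermitian_clonedState c t P).ptranspose
    (by positivity) (by positivity) (star_dotProduct_ptranspose_clonedState_mulVec c t P),
    abs_div, abs_mul, abs_two, abs_of_pos (by norm_num : (0:ℝ) < 9)]
  constructor <;> intro h <;> linarith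

/-- Broadcasting range of werner-like states under local cloning.  The
nonlocal output `ρ̃₁₄ = {(2/3)xʷ, (2/3)xʷ, (4/9)Tʷ}` of the Buzek–Hillery local optimal
cloner applied to the werner-like state (parameters `p`, `α`, `β = √(1−α²)`) has
non-positive-semidefinite partial transpose (i.e. is entangled) iff `3/4 < p ≤ 1` and
`N₋ < α² < N₊`, where `N± = (1/16)(8 ± √(48 − 81/p² + 72/p))`. -/
theorem wernerlike_broadcasting_range_local (p α : ℝ)
    (hp0 : 0 ≤ p) (hp1 : p ≤ 1) (hα0 : 0 ≤ α) (hα1 : α ≤ 1) :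
    ¬ (ptranspose ((1/4 : ℂ) • ((1 : Matrix (Fin 2 × Fin 2) (Fin 2 × Fin 2) ℂ)
        + ((2/3 * p * (2*α^2 - 1) : ℝ) : ℂ) • (pauli 2 ⊗ₖ 1 + 1 ⊗ₖ pauli 2)
        + (4/9 : ℂ) • (((2 * p * α * Real.sqrt (1 - α^2) : ℝ) : ℂ) • (pauli 0 ⊗ₖ pauli 0)
            - ((2 * p * α * Real.sqrt (1 - α^2) : ℝ) : ℂ) • (pauli 1 ⊗ₖ pauli 1)
            + ((p : ℝ) : ℂ) • (pauli 2 ⊗ₖ pauli 2))))).PosSemidef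
    ↔ (3/4 < p ∧ p ≤ 1 ∧
        (1/16) * (8 - Real.sqrt (48 - 81/p^2 + 72/p)) < α^2 ∧
        α^2 < (1/16) * (8 + Real.sqrt (48 - 81/p^2 + 72/p))) := by
  have hα : α ^ 2 ≤ 1 := pow_le_one₀ hα0 hα1
  have hPSD := posSemidef_ptranspose_clonedState_iff (2/3 * p * (2*α^2 - 1))
    (2 * p * α * √(1 - α^2)) p (by nlinarith) (by nlinarith)
  unfold clonedState at hPSD
  rw [hPSD, abs_of_nonneg (by positivity), not_le, nine_sub_four_mul_lt_iff_sq_lt hp0 hp1 hα0 hα1,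
    sq_mul_lt_iff_three_quarters_lt hp0 (sq_nonneg _), sq_sixteen_mul_sub_eight_lt_iff]
  exact ⟨fun ⟨hp, hN⟩ => ⟨hp, hp1, hN⟩, fun ⟨hp, _, hN⟩ => ⟨hp, hN⟩⟩
end

section
/- Let α ∈ [0,1], β = √(1−α²), and consider the two-qubit matrix ρ̃ = (1/4)·(I₄ + (2/3)(2α²−1)(σ₃⊗I₂ + I₂⊗σ₃) + (4/9)·(2αβ·σ₁⊗σ₁ − 2αβ·σ₂⊗σ₂ + σ₃⊗σ₃)). Then ρ̃^{T₂} fails to be positive semidefinite (equivalently, ρ̃ is entangled) if and only if (8−√39)/16 < α² < (8+√39)/16. This is the range for broadcasting of entanglement of the pure state α|00⟩+β|11⟩ via local optimal cloning. -/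
/-!
The partial transpose of ρ̃ is an X-shaped matrix: diagonal `(a, d, d, b)` in the basis
`00, 01, 10, 11`, plus the entry `c` coupling `01` and `10`. Its eigenvalues are `a`, `b`, `d ± c`,
and here `a = 1/36 + 2α²/3`, `b = 25/36 - 2α²/3`, `d = 5/36`, `c = 4αβ/9` with `β = √(1 - α²)`.
Only `d - c` can be negative, which happens iff `αβ > 5/16`, i.e. iff `α²(1 - α²) > 25/256`;
the roots of `t(1 - t) = 25/256` are `(8 ± √39)/16`.
-/

open Matrix Kronecker
open scoped ComplexOrder

noncomputable def xMatrix (a b c d : ℝ) : Matrix (Fin 2 × Fin 2) (Fin 2 × Fin 2) ℂ :=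
  Matrix.of fun p q =>
    if p = (0, 0) ∧ q = (0, 0) then (a : ℂ)
    else if p = (1, 1) ∧ q = (1, 1) then (b : ℂ)
    else if p = q then (d : ℂ)
    else if p = (0, 1) ∧ q = (1, 0) ∨ p = (1, 0) ∧ q = (0, 1) then (c : ℂ)
    else 0

namespace xMatrix

variable (a b c d : ℝ)

lemma isHermitian : (xMatrix a b c d).IsHermitian := by
  ext ⟨i, μ⟩ ⟨j, ν⟩
  fin_cases i <;> fin_cases μ <;> fin_cases j <;> fin_cases ν <;>
    simp [xMatrix, conjTranspose_apply]

lemma dotProduct_mulVec (x : Fin 2 × Fin 2 → ℂ) :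
    star x ⬝ᵥ xMatrix a b c d *ᵥ x =
      ((a * Complex.normSq (x (0, 0)) + b * Complex.normSq (x (1, 1))
        + (d + c) / 2 * Complex.normSq (x (0, 1) + x (1, 0))
        + (d - c) / 2 * Complex.normSq (x (0, 1) - x (1, 0)) : ℝ) : ℂ) := by
  simp only [dotProduct, Pi.star_apply, RCLike.star_def, mulVec, xMatrix, Fin.isValue, of_apply,
    ite_mul, zero_mul, Fintype.sum_prod_type, Prod.mk.injEq, Fin.sum_univ_two, and_true,
    zero_ne_one, and_false, ↓reduceIte, or_false, one_ne_zero, false_or, add_zero, zero_add,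
    Complex.normSq_apply, Complex.add_re, Complex.add_im, Complex.sub_re, Complex.sub_im,
    Complex.ofReal_add, Complex.ofReal_mul, Complex.ofReal_div, Complex.ofReal_ofNat,
    Complex.ofReal_sub, Complex.ext_iff, Complex.mul_re, Complex.conj_re, Complex.ofReal_re,
    Complex.ofReal_im, sub_zero, Complex.conj_im, Complex.mul_im, neg_mul, sub_neg_eq_add,
    mul_zero, Complex.div_ofNat_re, Complex.div_ofNat_im, zero_div, sub_self]
  constructor <;> ring

lemma posSemidef_iff :
    (xMatrix a b c d).PosSemidef ↔ 0 ≤ a ∧ 0 ≤ b ∧ 0 ≤ d + c ∧ 0 ≤ d - c := by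
  constructor
  · intro h
    -- test against the eigenvectors e₀₀, e₁₁, e₀₁ ± e₁₀
    have test := fun x => (dotProduct_mulVec a b c d x ▸ h.dotProduct_mulVec_nonneg x :)
    simp only [Complex.zero_le_real] at test
    refine ⟨?_, ?_, ?_, ?_⟩
    · simpa using test (Pi.single (0, 0) 1)
    · simpa using test (Pi.single (1, 1) 1)
    · have := test (Pi.single (0, 1) 1 + Pi.single (1, 0) 1)
      norm_num [Pi.single_apply] at this
      linarith
    · have := test (Pi.single (0, 1) 1 - Pi.single (1, 0) 1)
      norm_num [Pi.single_apply] at this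
      linarith
  · rintro ⟨ha, hb, hplus, hminus⟩
    refine .of_dotProduct_mulVec_nonneg (isHermitian a b c d) fun x => ?_
    rw [dotProduct_mulVec, Complex.zero_le_real]
    have := Complex.normSq_nonneg
    linarith [mul_nonneg ha (this (x (0, 0))), mul_nonneg hb (this (x (1, 1))),
      mul_nonneg hplus (this (x (0, 1) + x (1, 0))), mul_nonneg hminus (this (x (0, 1) - x (1, 0)))]

end xMatrix

lemma ptranspose_clonerOutput (α s : ℝ) :
    ptranspose ((1/4 : ℂ) • ((1 : Matrix (Fin 2 × Fin 2) (Fin 2 × Fin 2) ℂ)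
        + ((2/3 * (2*α^2 - 1) : ℝ) : ℂ) • (pauli 2 ⊗ₖ 1 + 1 ⊗ₖ pauli 2)
        + (4/9 : ℂ) • (((2 * α * s : ℝ) : ℂ) • (pauli 0 ⊗ₖ pauli 0)
            - ((2 * α * s : ℝ) : ℂ) • (pauli 1 ⊗ₖ pauli 1)
            + pauli 2 ⊗ₖ pauli 2)))
    = xMatrix (1/36 + 2/3 * α^2) (25/36 - 2/3 * α^2) (4/9 * (α * s)) (5/36) := by
  ext ⟨i, μ⟩ ⟨j, ν⟩
  fin_cases i <;> fin_cases μ <;> fin_cases j <;> fin_cases ν <;>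
    simp [ptranspose, kroneckerMap_apply, one_apply, pauli, xMatrix, Complex.ext_iff,
      -Complex.ofReal_pow] <;> ring

lemma lt_mul_one_sub_iff (t : ℝ) :
    25/256 < t * (1 - t) ↔ (8 - √39) / 16 < t ∧ t < (8 + √39) / 16 := by
  have factor : t * (1 - t) - 25/256 = -((t - (8 - √39) / 16) * (t - (8 + √39) / 16)) := by
    ring_nf
    rw [Real.sq_sqrt (by norm_num)]
    ring
  have : (8 - √39) / 16 < (8 + √39) / 16 := by
    have : 0 < √39 := by positivity
    linarith
  rw [← sub_pos, factor, neg_pos, mul_neg_iff]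
  constructor
  · rintro (⟨h1, h2⟩ | ⟨h1, h2⟩) <;> constructor <;> linarith
  · rintro ⟨h1, h2⟩
    exact Or.inl ⟨by linarith, by linarith⟩

lemma five_sixteenths_lt_mul_sqrt_iff {α : ℝ} (h0 : 0 ≤ α) (h1 : α ≤ 1) :
    5/16 < α * √(1 - α^2) ↔ (8 - √39) / 16 < α^2 ∧ α^2 < (8 + √39) / 16 := by
  rw [← lt_mul_one_sub_iff, ← pow_lt_pow_iff_left₀ (by norm_num) (by positivity) two_ne_zero,
    mul_pow, Real.sq_sqrt (by nlinarith)]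
  norm_num

/-- Broadcasting range of the pure state `α|00⟩ + β|11⟩` via local optimal
cloning.  The nonlocal output `ρ̃₁₄ = {(2/3)x, (2/3)x, (4/9)T}` of the Buzek–Hillery local
optimal cloner has non-positive-semidefinite partial transpose (i.e. is entangled) iff
`(8−√39)/16 < α² < (8+√39)/16`. -/
theorem pure_state_broadcasting_range_local (α : ℝ) (hα0 : 0 ≤ α) (hα1 : α ≤ 1) :
    ¬ (ptranspose ((1/4 : ℂ) • ((1 : Matrix (Fin 2 × Fin 2) (Fin 2 × Fin 2) ℂ)
        + ((2/3 * (2*α^2 - 1) : ℝ) : ℂ) • (pauli 2 ⊗ₖ 1 + 1 ⊗ₖ pauli 2)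
        + (4/9 : ℂ) • (((2 * α * Real.sqrt (1 - α^2) : ℝ) : ℂ) • (pauli 0 ⊗ₖ pauli 0)
            - ((2 * α * Real.sqrt (1 - α^2) : ℝ) : ℂ) • (pauli 1 ⊗ₖ pauli 1)
            + pauli 2 ⊗ₖ pauli 2)))).PosSemidef
    ↔ ((8 - Real.sqrt 39) / 16 < α^2 ∧ α^2 < (8 + Real.sqrt 39) / 16) := by
  rw [ptranspose_clonerOutput, xMatrix.posSemidef_iff, ← five_sixteenths_lt_mul_sqrt_iff hα0 hα1]
  have h00 : 0 ≤ 1/36 + 2/3 * α^2 := by positivity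
  have h11 : 0 ≤ 25/36 - 2/3 * α^2 := by nlinarith
  have hplus : 0 ≤ 5/36 + 4/9 * (α * √(1 - α^2)) := by positivity
  constructor
  · intro h
    by_contra! hle
    exact h ⟨h00, h11, hplus, by linarith⟩
  · rintro h ⟨-, -, -, hminus⟩
    linarith
end
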